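/- Let Ω be a set, d ∈ ℕ, let k : Ω × Ω → ℝ^{d×d} be a positive semidefinite matrix-valued kernel, let x₁, …, xₙ ∈ Ω, and let σ ≠ 0. Let K_XX be the (nd)×(nd) block matrix with blocks (K_XX)_{ij} = k(xᵢ, xⱼ) and for x ∈ Ω let K_X(x) be the (nd)×d block-column matrix with blocks (K_X(x))_i = k(xᵢ, x). Then the posterior kernel k_p(x, x') = k(x, x') − K_X(x)ᵀ (K_XX + σ² I_{nd})⁻¹ K_X(x') is a positive semidefinite matrix-valued kernel on Ω. -/

import Mathlib

open Matrix

/-- A matrix-valued kernel `k : Ω × Ω → ℝ^{d×d}` is positive semidefinite if it is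
symmetric (`k x y = (k y x)ᵀ`) and all its Gram "matrices" are positive semidefinite. -/
def IsPSDMatrixKernel {Ω : Type*} {d : ℕ} (k : Ω → Ω → Matrix (Fin d) (Fin d) ℝ) : Prop :=
  (∀ x y : Ω, k x y = (k y x)ᵀ) ∧
  ∀ (m : ℕ) (x : Fin m → Ω) (c : Fin m → (Fin d → ℝ)),
    0 ≤ ∑ i, ∑ j, c i ⬝ᵥ (k (x i) (x j)).mulVec (c j)

/-!
On any finite set of points `y`, the Gram matrix of the posterior kernel is the Schur complement
of the block `K_XX + S` (with noise `S = σ²I`) in the block matrix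
`[[K_XX + S, K_XY], [K_YX, K_YY]]`. That matrix is the joint Gram matrix of `k` on the points
`(x, y)` plus the positive semidefinite `diag(S, 0)`, and the Schur complement of a positive
definite block in a positive semidefinite matrix is positive semidefinite.
-/

section KernelMatrices

variable {Ω ι κ : Type*} {d : ℕ}

def kernelCross (k : Ω → Ω → Matrix (Fin d) (Fin d) ℝ) (x : ι → Ω) (y : κ → Ω) :
    Matrix (ι × Fin d) (κ × Fin d) ℝ :=
  Matrix.of fun a b => k (x a.1) (y b.1) a.2 b.2

def kernelGram (k : Ω → Ω → Matrix (Fin d) (Fin d) ℝ) (x : ι → Ω) :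
    Matrix (ι × Fin d) (ι × Fin d) ℝ :=
  kernelCross k x x

def kernelColumn (k : Ω → Ω → Matrix (Fin d) (Fin d) ℝ) (x : ι → Ω) (y : Ω) :
    Matrix (ι × Fin d) (Fin d) ℝ :=
  Matrix.of fun a q => k (x a.1) y a.2 q

lemma kernelCross_conjTranspose {k : Ω → Ω → Matrix (Fin d) (Fin d) ℝ}
    (hsymm : ∀ x y, k x y = (k y x)ᵀ) (x : ι → Ω) (y : κ → Ω) :
    (kernelCross k x y)ᴴ = kernelCross k y x := by
  ext a b
  simp [kernelCross, hsymm (y a.1)]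

lemma dotProduct_kernelGram_mulVec [Fintype ι] (k : Ω → Ω → Matrix (Fin d) (Fin d) ℝ)
    (x : ι → Ω) (v : ι × Fin d → ℝ) :
    v ⬝ᵥ kernelGram k x *ᵥ v
      = ∑ i, ∑ j, (fun p => v (i, p)) ⬝ᵥ k (x i) (x j) *ᵥ (fun q => v (j, q)) := by
  simp only [dotProduct, mulVec, Fintype.sum_prod_type, Finset.mul_sum]
  refine Finset.sum_congr rfl fun i _ => ?_
  rw [Finset.sum_comm]
  simp [kernelGram, kernelCross]

lemma kernelGram_comp_equiv (k : Ω → Ω → Matrix (Fin d) (Fin d) ℝ) (x : ι → Ω) (e : κ ≃ ι) :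
    kernelGram k (x ∘ e) =
      (kernelGram k x).submatrix (e.prodCongr (Equiv.refl _)) (e.prodCongr (Equiv.refl _)) := by
  rfl

lemma kernelGram_sumElim (k : Ω → Ω → Matrix (Fin d) (Fin d) ℝ) (x : ι → Ω) (y : κ → Ω) :
    (kernelGram k (Sum.elim x y)).submatrix (Equiv.sumProdDistrib ι κ (Fin d)).symm
        (Equiv.sumProdDistrib ι κ (Fin d)).symm =
      fromBlocks (kernelGram k x) (kernelCross k x y) (kernelCross k y x) (kernelGram k y) := by
  ext (⟨i, p⟩ | ⟨i, p⟩) (⟨j, q⟩ | ⟨j, q⟩) <;> rfl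

lemma kernelGram_sub_mul_mul [Fintype ι] (k : Ω → Ω → Matrix (Fin d) (Fin d) ℝ) (x : ι → Ω)
    (y : κ → Ω) (M : Matrix (ι × Fin d) (ι × Fin d) ℝ) :
    kernelGram (fun a b => k a b - (kernelColumn k x a)ᵀ * M * kernelColumn k x b) y =
      kernelGram k y - (kernelCross k x y)ᵀ * M * kernelCross k x y := by
  ext a b
  simp [kernelGram, kernelCross, kernelColumn, mul_apply]

end KernelMatrices

namespace IsPSDMatrixKernel

variable {Ω ι : Type*} {d : ℕ} {k : Ω → Ω → Matrix (Fin d) (Fin d) ℝ}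

lemma isHermitian_kernelGram (hk : IsPSDMatrixKernel k) (x : ι → Ω) :
    (kernelGram k x).IsHermitian :=
  kernelCross_conjTranspose hk.1 x x

lemma posSemidef_kernelGram [Fintype ι] (hk : IsPSDMatrixKernel k) (x : ι → Ω) :
    (kernelGram k x).PosSemidef := by
  let e := Fintype.equivFin ι
  have hfin : (kernelGram k (x ∘ e.symm)).PosSemidef := by
    refine .of_dotProduct_mulVec_nonneg (hk.isHermitian_kernelGram _) fun v => ?_
    rw [star_trivial, dotProduct_kernelGram_mulVec]
    exact hk.2 _ _ _
  rwa [kernelGram_comp_equiv, posSemidef_submatrix_equiv] at hfin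

lemma of_posSemidef_kernelGram (hsymm : ∀ x y, k x y = (k y x)ᵀ)
    (hgram : ∀ (m : ℕ) (x : Fin m → Ω), (kernelGram k x).PosSemidef) :
    IsPSDMatrixKernel k := by
  refine ⟨hsymm, fun m x c => ?_⟩
  simpa [dotProduct_kernelGram_mulVec] using (hgram m x).dotProduct_mulVec_nonneg
    (fun a => c a.1 a.2)

lemma posterior [Fintype ι] [DecidableEq ι] (hk : IsPSDMatrixKernel k) (x : ι → Ω)
    {S : Matrix (ι × Fin d) (ι × Fin d) ℝ} (hS : S.PosDef) :
    IsPSDMatrixKernel fun a b =>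
      k a b - (kernelColumn k x a)ᵀ * (kernelGram k x + S)⁻¹ * kernelColumn k x b := by
  set A := kernelGram k x + S
  have hA : A.PosDef := PosDef.posSemidef_add (hk.posSemidef_kernelGram x) hS
  have hAinv : (A⁻¹)ᵀ = A⁻¹ := by
    rw [← conjTranspose_eq_transpose_of_trivial]
    exact hA.isHermitian.inv
  refine of_posSemidef_kernelGram (fun a b => ?_) fun m y => ?_
  · rw [transpose_sub, transpose_mul, transpose_mul, transpose_transpose, hAinv, hk.1 a b,
      Matrix.mul_assoc]
  · have : Invertible A := hA.isUnit.invertible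
    have : Invertible S := hS.isUnit.invertible
    have hjoint := hk.posSemidef_kernelGram (Sum.elim x y)
    rw [← posSemidef_submatrix_equiv (Equiv.sumProdDistrib ι (Fin m) (Fin d)).symm,
      kernelGram_sumElim, ← kernelCross_conjTranspose hk.1 x y] at hjoint
    have hnoise : (fromBlocks S 0 (0 : Matrix (ι × Fin d) (Fin m × Fin d) ℝ)ᴴ 0).PosSemidef :=
      (PosDef.fromBlocks₁₁ _ _ hS).2 (by simpa using PosSemidef.zero)
    have hsum := hjoint.add hnoise
    rw [fromBlocks_add, add_zero, conjTranspose_zero, add_zero, add_zero,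
      PosDef.fromBlocks₁₁ _ _ hA, conjTranspose_eq_transpose_of_trivial] at hsum
    rwa [kernelGram_sub_mul_mul]

end IsPSDMatrixKernel

/-- the Gaussian-process posterior kernel
`k_p(x,x') = k(x,x') − K_X(x)ᵀ (K_XX + σ²I)⁻¹ K_X(x')` obtained from a positive
semidefinite matrix-valued kernel `k`, points `x₁,…,xₙ` and noise `σ ≠ 0` is again a
positive semidefinite matrix-valued kernel. -/
theorem posterior_kernel_is_psd {Ω : Type*} {d n : ℕ}
    (k : Ω → Ω → Matrix (Fin d) (Fin d) ℝ) (hk : IsPSDMatrixKernel k)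
    (xs : Fin n → Ω) (σ : ℝ) (hσ : σ ≠ 0)
    (KXX : Matrix (Fin n × Fin d) (Fin n × Fin d) ℝ)
    (hKXX : ∀ (i j : Fin n) (p q : Fin d), KXX (i, p) (j, q) = k (xs i) (xs j) p q)
    (KX : Ω → Matrix (Fin n × Fin d) (Fin d) ℝ)
    (hKX : ∀ (x : Ω) (i : Fin n) (p q : Fin d), KX x (i, p) q = k (xs i) x p q) :
    IsPSDMatrixKernel (fun x x' =>
      k x x' -
        (KX x)ᵀ * (KXX + σ ^ 2 • (1 : Matrix (Fin n × Fin d) (Fin n × Fin d) ℝ))⁻¹ *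
          KX x') := by
  obtain rfl : KXX = kernelGram k xs := by
    ext ⟨i, p⟩ ⟨j, q⟩
    exact hKXX i j p q
  obtain rfl : KX = kernelColumn k xs := by
    ext x ⟨i, p⟩ q
    exact hKX x i p q
  exact hk.posterior xs (PosDef.one.smul (sq_pos_of_ne_zero hσ))
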